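/- arXiv:1310.4656 — 6 statements merged into one kernel-verified Lean document; each statement's English description precedes it below -/
import Mathlib

section
/- Let k ≥ 1 and a ≥ 3k be positive integers with 7 dividing a², and set m = (13/7)·k·a² + 2·k·a + 9·k. Then (a+1)²·a − m ≥ k·((8/7)·a² + 12·k − 6) > 0; in particular (a+1)²·a > m. -/
/-!
Clearing the denominator 7, the gap `(a+1)²a − m − k((8/7)a² + 12k − 6)` factors as
`(a − 3k)((a+1)² + 4k)`, which is nonnegative as soon as `a ≥ 3k ≥ 0`. The lower bound itself is
positive because `k ≥ 1` makes `12k − 6 > 0`.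
-/

section

variable {R : Type*} [Field R] [LinearOrder R] [IsStrictOrderedRing R]

theorem cube_sub_sub_mul_eq_mul {k a m : R} (hm : 7 * m = 13 * k * a ^ 2 + 14 * k * a + 63 * k) :
    (a + 1) ^ 2 * a - m - k * ((8 / 7) * a ^ 2 + 12 * k - 6) = (a - 3 * k) * ((a + 1) ^ 2 + 4 * k) := by
  linear_combination (-1 / 7 : R) * hm

theorem mul_le_cube_sub {k a m : R} (hk : 0 ≤ k) (ha : 3 * k ≤ a)
    (hm : 7 * m = 13 * k * a ^ 2 + 14 * k * a + 63 * k) :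
    k * ((8 / 7) * a ^ 2 + 12 * k - 6) ≤ (a + 1) ^ 2 * a - m := by
  have hgap : 0 ≤ (a - 3 * k) * ((a + 1) ^ 2 + 4 * k) :=
    mul_nonneg (sub_nonneg.2 ha) (by positivity)
  rw [← cube_sub_sub_mul_eq_mul hm] at hgap
  linarith

theorem mul_bound_pos {k a : R} (hk : 1 ≤ k) : 0 < k * ((8 / 7) * a ^ 2 + 12 * k - 6) := by
  have hsq := sq_nonneg a
  exact mul_pos (by linarith) (by linarith)

end

theorem stmt_7_general (k a m : ℤ) (hk : 1 ≤ k) (ha : 3 * k ≤ a)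
    (hm : 7 * m = 13 * k * a ^ 2 + 14 * k * a + 63 * k) :
    (((a : ℚ) + 1) ^ 2 * (a : ℚ) - (m : ℚ)
        ≥ (k : ℚ) * ((8 / 7) * (a : ℚ) ^ 2 + 12 * (k : ℚ) - 6)) ∧
    ((k : ℚ) * ((8 / 7) * (a : ℚ) ^ 2 + 12 * (k : ℚ) - 6) > 0) ∧
    (a + 1) ^ 2 * a > m := by
  have hkq : (1 : ℚ) ≤ k := by exact_mod_cast hk
  have hbound := mul_le_cube_sub (k := (k : ℚ)) (a := a) (m := m) (by linarith)
    (by exact_mod_cast ha) (by exact_mod_cast hm)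
  have hpos := mul_bound_pos (a := (a : ℚ)) hkq
  refine ⟨hbound, hpos, ?_⟩
  exact_mod_cast (show (m : ℚ) < ((a : ℚ) + 1) ^ 2 * a by linarith)

/-- With `m = (13/7)ka² + 2ka + 9k`, `k ≥ 1`, `a ≥ 3k`:
`(a+1)²a − m ≥ k((8/7)a² + 12k − 6) > 0`, in particular `(a+1)²a > m`. -/
theorem stmt_7 (k a m : ℤ) (hk : 1 ≤ k) (ha : 3 * k ≤ a)
    (hdvd : (7 : ℤ) ∣ a ^ 2)
    (hm : 7 * m = 13 * k * a ^ 2 + 14 * k * a + 63 * k) :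
    (((a : ℚ) + 1) ^ 2 * (a : ℚ) - (m : ℚ)
        ≥ (k : ℚ) * ((8 / 7) * (a : ℚ) ^ 2 + 12 * (k : ℚ) - 6)) ∧
    ((k : ℚ) * ((8 / 7) * (a : ℚ) ^ 2 + 12 * (k : ℚ) - 6) > 0) ∧
    (a + 1) ^ 2 * a > m :=
  stmt_7_general k a m hk ha hm
end

section
/- Let k > 3 and a ≥ 3k be integers with 7 ∣ a². Set m = (13/7)·k·a² + 2·k·a + 9·k. Then for every integer a_t ≥ 1, m·a_t − (k·a_t + 2)·(a² + 2·a + 6) ≥ (6/7)·k·a² + 3·k − 2·a² − 4·a − 12 ≥ (4/7)·a² − 4·a − 3 > 0. -/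
/-!
Since `m = (13/7)·k·a² + 2·k·a + 9·k`, the gain `m·t − (k·t + 2)(a² + 2a + 6)` equals
`t·((6/7)·k·a² + 3·k) − 2(a² + 2a + 6)`, which is increasing in `t`, so `t = 1` gives the first bound.
The second bound differs from the first by `(k − 3)((6/7)·a² + 3)`, and the last quadratic is
positive as soon as `a ≥ 8`.
-/

section MergeGain

variable {F : Type*} [Field F] [LinearOrder F] [IsStrictOrderedRing F]

theorem merge_gain_eq {k a m t : F} (hm : 7 * m = 13 * k * a ^ 2 + 14 * k * a + 63 * k) :
    m * t - (k * t + 2) * (a ^ 2 + 2 * a + 6) =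
      t * ((6 / 7) * k * a ^ 2 + 3 * k) - (2 * a ^ 2 + 4 * a + 12) := by
  linear_combination (t / 7) * hm

theorem merge_gain_ge {k a m t : F} (hk : 0 ≤ k)
    (hm : 7 * m = 13 * k * a ^ 2 + 14 * k * a + 63 * k) (ht : 1 ≤ t) :
    (6 / 7) * k * a ^ 2 + 3 * k - 2 * a ^ 2 - 4 * a - 12 ≤
      m * t - (k * t + 2) * (a ^ 2 + 2 * a + 6) := by
  have hgain : (6 / 7) * k * a ^ 2 + 3 * k ≤ t * ((6 / 7) * k * a ^ 2 + 3 * k) :=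
    le_mul_of_one_le_left (by positivity) ht
  rw [merge_gain_eq hm]
  linarith

theorem four_sevenths_bound_le {k : F} (hk : 3 ≤ k) (a : F) :
    (4 / 7) * a ^ 2 - 4 * a - 3 ≤ (6 / 7) * k * a ^ 2 + 3 * k - 2 * a ^ 2 - 4 * a - 12 := by
  have hdiff : (6 / 7) * k * a ^ 2 + 3 * k - 2 * a ^ 2 - 4 * a - 12 - ((4 / 7) * a ^ 2 - 4 * a - 3)
      = (k - 3) * ((6 / 7) * a ^ 2 + 3) := by ring
  have : 0 ≤ (k - 3) * ((6 / 7) * a ^ 2 + 3) := mul_nonneg (by linarith) (by positivity)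
  linarith

theorem four_sevenths_sq_sub_pos {a : F} (ha : 8 ≤ a) : 0 < (4 / 7) * a ^ 2 - 4 * a - 3 := by
  nlinarith

end MergeGain

theorem stmt_9_general (k a m t : ℤ) (hk : 3 < k) (ha : 3 * k ≤ a)
    (hm : 7 * m = 13 * k * a ^ 2 + 14 * k * a + 63 * k)
    (ht : 1 ≤ t) :
    ((m : ℚ) * (t : ℚ) - ((k : ℚ) * (t : ℚ) + 2) * ((a : ℚ) ^ 2 + 2 * (a : ℚ) + 6)
        ≥ (6 / 7) * (k : ℚ) * (a : ℚ) ^ 2 + 3 * (k : ℚ) - 2 * (a : ℚ) ^ 2 - 4 * (a : ℚ) - 12) ∧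
    ((6 / 7) * (k : ℚ) * (a : ℚ) ^ 2 + 3 * (k : ℚ) - 2 * (a : ℚ) ^ 2 - 4 * (a : ℚ) - 12
        ≥ (4 / 7) * (a : ℚ) ^ 2 - 4 * (a : ℚ) - 3) ∧
    ((4 / 7) * (a : ℚ) ^ 2 - 4 * (a : ℚ) - 3 > 0) := by
  have hkq : (3 : ℚ) ≤ k := by exact_mod_cast hk.le
  have haq : (8 : ℚ) ≤ a := by exact_mod_cast (show (8 : ℤ) ≤ a by omega)
  have htq : (1 : ℚ) ≤ t := by exact_mod_cast ht
  have hmq : 7 * (m : ℚ) = 13 * k * a ^ 2 + 14 * k * a + 63 * k := by exact_mod_cast hm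
  exact ⟨merge_gain_ge (by linarith) hmq htq, four_sevenths_bound_le hkq _,
    four_sevenths_sq_sub_pos haq⟩

/-- The chain of estimates from Lemma 6 of the reduction. -/
theorem stmt_9 (k a m t : ℤ) (hk : 3 < k) (ha : 3 * k ≤ a)
    (hdvd : (7 : ℤ) ∣ a ^ 2)
    (hm : 7 * m = 13 * k * a ^ 2 + 14 * k * a + 63 * k)
    (ht : 1 ≤ t) :
    ((m : ℚ) * (t : ℚ) - ((k : ℚ) * (t : ℚ) + 2) * ((a : ℚ) ^ 2 + 2 * (a : ℚ) + 6)
        ≥ (6 / 7) * (k : ℚ) * (a : ℚ) ^ 2 + 3 * (k : ℚ) - 2 * (a : ℚ) ^ 2 - 4 * (a : ℚ) - 12) ∧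
    ((6 / 7) * (k : ℚ) * (a : ℚ) ^ 2 + 3 * (k : ℚ) - 2 * (a : ℚ) ^ 2 - 4 * (a : ℚ) - 12
        ≥ (4 / 7) * (a : ℚ) ^ 2 - 4 * (a : ℚ) - 3) ∧
    ((4 / 7) * (a : ℚ) ^ 2 - 4 * (a : ℚ) - 3 > 0) :=
  stmt_9_general k a m t hk ha hm ht
end

section
/- Let k ≥ 1 and a ≥ 3k be integers with 7 ∣ a², and set m = (13/7)·k·a² + 2·k·a + 9·k. If a_t is a positive integer with a_t < a/(2k), then m − (k·a_t + 2)·(k·a + 6·k) ≥ k·((19/14)·a² − 3·a − 3) > 0. -/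
/-!
Since `k > 0` and `2kt < a` with all quantities integers, `2kt + 1 ≤ a`, so the factor
`k·t + 2` is at most `(a + 3)/2`. Hence the penalty `(k·t + 2)(k·a + 6k)` is at most
`k(a + 3)(a + 6)/2`, and subtracting it from `m` leaves `k((19/14)a² − (5/2)a)`, which dominates
`k((19/14)a² − 3a − 3)`. The latter is positive once `a ≥ 3`.
-/

theorem Int.two_mul_mul_add_one_le_of_lt_div {k t a : ℤ} (hk : 0 < k)
    (h : (t : ℚ) < a / (2 * k)) : 2 * k * t + 1 ≤ a := by
  have hkq : (0 : ℚ) < 2 * k := by exact_mod_cast mul_pos two_pos hk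
  have : ((2 * k * t : ℤ) : ℚ) < a := by
    push_cast
    linarith [(lt_div_iff₀ hkq).mp h]
  exact_mod_cast this

section OrderedField

variable {K : Type*} [Field K] [LinearOrder K] [IsStrictOrderedRing K]

theorem mul_add_two_mul_le_of_two_mul_add_one_le {k t a : K} (hk : 0 ≤ k) (ha : -6 ≤ a)
    (h : 2 * k * t + 1 ≤ a) :
    (k * t + 2) * (k * a + 6 * k) ≤ k * (a + 3) * (a + 6) / 2 := by
  have hfactor : k * t + 2 ≤ (a + 3) / 2 := by linarith
  calc (k * t + 2) * (k * a + 6 * k) = (k * t + 2) * (k * (a + 6)) := by ring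
    _ ≤ (a + 3) / 2 * (k * (a + 6)) :=
        mul_le_mul_of_nonneg_right hfactor (mul_nonneg hk (by linarith))
    _ = k * (a + 3) * (a + 6) / 2 := by ring

theorem quadratic_pos_of_three_le {a : K} (ha : 3 ≤ a) : 0 < 19 / 14 * a ^ 2 - 3 * a - 3 := by
  nlinarith

end OrderedField

theorem stmt_10_general (k a m t : ℤ) (hk : 1 ≤ k) (ha : 3 * k ≤ a)
    (hm : 7 * m = 13 * k * a ^ 2 + 14 * k * a + 63 * k)
    (htb : (t : ℚ) < (a : ℚ) / (2 * (k : ℚ))) :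
    ((m : ℚ) - ((k : ℚ) * (t : ℚ) + 2) * ((k : ℚ) * (a : ℚ) + 6 * (k : ℚ))
        ≥ (k : ℚ) * ((19 / 14) * (a : ℚ) ^ 2 - 3 * (a : ℚ) - 3)) ∧
    ((k : ℚ) * ((19 / 14) * (a : ℚ) ^ 2 - 3 * (a : ℚ) - 3) > 0) := by
  have hkq : (1 : ℚ) ≤ k := by exact_mod_cast hk
  have ha3 : (3 : ℚ) ≤ a := by
    have : (3 * k : ℚ) ≤ a := by exact_mod_cast ha
    linarith
  have hmq : 7 * (m : ℚ) = 13 * k * a ^ 2 + 14 * k * a + 63 * k := by exact_mod_cast hm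
  have hta : 2 * (k : ℚ) * t + 1 ≤ a := by
    exact_mod_cast Int.two_mul_mul_add_one_le_of_lt_div (by omega) htb
  have hpenalty := mul_add_two_mul_le_of_two_mul_add_one_le (by linarith) (by linarith) hta
  refine ⟨?_, mul_pos (by linarith) (quadratic_pos_of_three_le ha3)⟩
  linarith [mul_nonneg (by linarith : (0 : ℚ) ≤ k) (by linarith : (0 : ℚ) ≤ a)]

/-- The estimate from Lemma 7: with `m = (13/7)ka² + 2ka + 9k` and `a_t < a/(2k)`,
`m − (k·a_t + 2)(ka + 6k) ≥ k((19/14)a² − 3a − 3) > 0`. -/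
theorem stmt_10 (k a m t : ℤ) (hk : 1 ≤ k) (ha : 3 * k ≤ a)
    (hdvd : (7 : ℤ) ∣ a ^ 2)
    (hm : 7 * m = 13 * k * a ^ 2 + 14 * k * a + 63 * k)
    (ht : 1 ≤ t) (htb : (t : ℚ) < (a : ℚ) / (2 * (k : ℚ))) :
    ((m : ℚ) - ((k : ℚ) * (t : ℚ) + 2) * ((k : ℚ) * (a : ℚ) + 6 * (k : ℚ))
        ≥ (k : ℚ) * ((19 / 14) * (a : ℚ) ^ 2 - 3 * (a : ℚ) - 3)) ∧
    ((k : ℚ) * ((19 / 14) * (a : ℚ) ^ 2 - 3 * (a : ℚ) - 3) > 0) :=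
  stmt_10_general k a m t hk ha hm htb
end

section
/- Consider any division of G(A) into communities C₁, …, C_k (where Cⱼ contains exactly one biclique K_j together with some element-vertex pairs) plus the 6k stars as singleton communities, such that each pair (xᵢ, yᵢ) lies in one biclique community. Then the number of inter-community edges is exactly 2·a·(k−1) + 6·k, independently of the assignment of element pairs to biclique communities. -/
/-- Vertices of the gadget network `G(A)`: for each of the `k` bicliques, a red (`true`)
and blue (`false`) copy of `Σ i, Fin (av i)` (so `a` vertices per side, grouped by the
element they attach to); the `6k` element vertices `xᵢ` (red) and `yᵢ` (blue); the `6k`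
star internal vertices; and `6k·L` star leaves (`L = a²/7`). `StarInt/StarLeaf (i, c, _)`
belong to the star attached to the element vertex `(i, c)`. -/
def GadgetVert (k L : ℕ) (av : Fin (3 * k) → ℕ) : Type :=
  (Fin k × Bool × Σ i : Fin (3 * k), Fin (av i)) ⊕   -- biclique vertices
  (Fin (3 * k) × Bool) ⊕                              -- element vertices
  (Fin (3 * k) × Bool) ⊕                              -- star internal vertices
  (Fin (3 * k) × Bool × Fin L)                        -- star leaves

/-- The base relation generating the edges of `G(A)`. -/
def gadgetRel (k L : ℕ) (av : Fin (3 * k) → ℕ) :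
    GadgetVert k L av → GadgetVert k L av → Prop :=
  fun x y =>
    match x, y with
    | Sum.inl (t, c, _), Sum.inl (t', c', _) =>
        t = t' ∧ c = true ∧ c' = false
    | Sum.inr (Sum.inl (i, c)), Sum.inl (_, c', ⟨i', _⟩) =>
        i = i' ∧ c' = !c
    | Sum.inr (Sum.inl (i, c)), Sum.inr (Sum.inl (i', c')) =>
        i = i' ∧ c = true ∧ c' = false
    | Sum.inr (Sum.inl (i, c)), Sum.inr (Sum.inr (Sum.inl (i', c'))) =>
        i = i' ∧ c = c'
    | Sum.inr (Sum.inr (Sum.inl (i, c))), Sum.inr (Sum.inr (Sum.inr (i', c', _))) =>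
        i = i' ∧ c = c'
    | _, _ => False

/-- The gadget network `G(A)` as a simple graph. -/
def gadgetGraph (k L : ℕ) (av : Fin (3 * k) → ℕ) : SimpleGraph (GadgetVert k L av) :=
  SimpleGraph.fromRel (gadgetRel k L av)

/-- The community of each vertex in a division where biclique `j` together with the
element pairs assigned to it by `σ` forms community `Sum.inl j`, and each star (internal
vertex plus its leaves) forms its own community `Sum.inr (i, c)`. -/
def commOf (k L : ℕ) (av : Fin (3 * k) → ℕ) (σ : Fin (3 * k) → Fin k) :
    GadgetVert k L av → Fin k ⊕ (Fin (3 * k) × Bool) :=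
  fun v =>
    match v with
    | Sum.inl (t, _, _) => Sum.inl t
    | Sum.inr (Sum.inl (i, _)) => Sum.inl (σ i)
    | Sum.inr (Sum.inr (Sum.inl (i, c))) => Sum.inr (i, c)
    | Sum.inr (Sum.inr (Sum.inr (i, c, _))) => Sum.inr (i, c)

/-! The inter-community edges are exactly the edges from an element vertex `xᵢ` or `yᵢ` to the
opposite side of a biclique other than its own — `aᵢ` of them for each of the `k − 1` foreign
bicliques — together with the `6k` edges from element vertices to their star centres: every
other edge lies inside one biclique, one element pair (which shares its community) or one star.
Indexing these edges by an explicit type and counting it gives `2a(k − 1) + 6k`. -/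

def interCommunityEdges {V W : Type*} (G : SimpleGraph V) (f : V → W) : Set (Sym2 V) :=
  {e ∈ G.edgeSet | ¬ (Sym2.map f e).IsDiag}

lemma mk_mem_interCommunityEdges {V W : Type*} {G : SimpleGraph V} {f : V → W} {x y : V} :
    s(x, y) ∈ interCommunityEdges G f ↔ G.Adj x y ∧ f x ≠ f y := by
  simp [interCommunityEdges]

def CutEdgeIndex (k : ℕ) (av : Fin (3 * k) → ℕ) (σ : Fin (3 * k) → Fin k) : Type :=
  (Σ i : Fin (3 * k), Fin (av i) × Bool × {t : Fin k // t ≠ σ i}) ⊕ (Fin (3 * k) × Bool)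

def cutEdge (k L : ℕ) (av : Fin (3 * k) → ℕ) (σ : Fin (3 * k) → Fin k) :
    CutEdgeIndex k av σ → Sym2 (GadgetVert k L av)
  | Sum.inl ⟨i, p, c, t⟩ => s(Sum.inr (Sum.inl (i, c)), Sum.inl (t.1, !c, ⟨i, p⟩))
  | Sum.inr (i, c) => s(Sum.inr (Sum.inl (i, c)), Sum.inr (Sum.inr (Sum.inl (i, c))))

section GadgetCut

variable {k L : ℕ} {av : Fin (3 * k) → ℕ} {σ : Fin (3 * k) → Fin k}

lemma cutEdge_injective : Function.Injective (cutEdge k L av σ) := by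
  rintro (⟨i, p, c, t, ht⟩ | ⟨i, c⟩) (⟨i', p', c', t', ht'⟩ | ⟨i', c'⟩) h <;>
    rcases Sym2.eq_iff.mp h with ⟨⟨⟩, ⟨⟩⟩ | ⟨⟨⟩, ⟨⟩⟩ <;> rfl

lemma cutEdge_mem_interCommunityEdges (j : CutEdgeIndex k av σ) :
    cutEdge k L av σ j ∈ interCommunityEdges (gadgetGraph k L av) (commOf k L av σ) := by
  rcases j with ⟨i, p, c, t, ht⟩ | ⟨i, c⟩ <;>
    refine mk_mem_interCommunityEdges.mpr
      ⟨(SimpleGraph.fromRel_adj ..).mpr ⟨nofun, .inl ⟨rfl, rfl⟩⟩, ?_⟩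
  · simpa [commOf] using ht.symm
  · simp [commOf]

lemma exists_cutEdge_eq_of_gadgetRel {x y : GadgetVert k L av} (hxy : gadgetRel k L av x y)
    (hcut : commOf k L av σ x ≠ commOf k L av σ y) :
    ∃ j, cutEdge k L av σ j = s(x, y) := by
  rcases x with ⟨t, c, i, p⟩ | ⟨i, c⟩ | ⟨i, c⟩ | ⟨i, c, l⟩ <;>
    rcases y with ⟨t', c', i', p'⟩ | ⟨i', c'⟩ | ⟨i', c'⟩ | ⟨i', c', l'⟩ <;>
    simp only [gadgetRel] at hxy <;> simp only [commOf] at hcut <;>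
    obtain ⟨rfl, hxy⟩ := hxy
  · exact absurd rfl hcut
  · rw [hxy]
    exact ⟨Sum.inl ⟨i, p', c, t', fun h => hcut (congrArg Sum.inl h.symm)⟩, rfl⟩
  · exact absurd rfl hcut
  · exact ⟨Sum.inr (i, c), by rw [hxy]; rfl⟩
  · exact absurd (by rw [hxy]) hcut

lemma range_cutEdge :
    Set.range (cutEdge k L av σ) = interCommunityEdges (gadgetGraph k L av) (commOf k L av σ) := by
  refine Set.Subset.antisymm (Set.range_subset_iff.mpr cutEdge_mem_interCommunityEdges) ?_
  intro e he
  induction e using Sym2.ind with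
  | _ x y =>
    obtain ⟨hadj, hcut⟩ := mk_mem_interCommunityEdges.mp he
    rcases ((SimpleGraph.fromRel_adj ..).mp hadj).2 with hxy | hyx
    · exact exists_cutEdge_eq_of_gadgetRel hxy hcut
    · obtain ⟨j, hj⟩ := exists_cutEdge_eq_of_gadgetRel hyx hcut.symm
      exact ⟨j, hj.trans Sym2.eq_swap⟩

lemma card_cutEdgeIndex : Nat.card (CutEdgeIndex k av σ) = 2 * (∑ i, av i) * (k - 1) + 6 * k := by
  rw [CutEdgeIndex, Nat.card_sum, Nat.card_sigma]
  simp only [Nat.card_eq_fintype_card, Fintype.card_prod, Fintype.card_fin, Fintype.card_bool,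
    ne_eq, Fintype.card_subtype_compl, Fintype.card_unique, ← Finset.sum_mul]
  ring

end GadgetCut

theorem stmt_15_general (k a : ℕ)
    (av : Fin (3 * k) → ℕ) (hsum : ∑ i, av i = a)
    (σ : Fin (3 * k) → Fin k) :
    {e ∈ (gadgetGraph k (a ^ 2 / 7) av).edgeSet |
        ¬ (Sym2.map (commOf k (a ^ 2 / 7) av σ) e).IsDiag}.ncard
      = 2 * a * (k - 1) + 6 * k := by
  change (interCommunityEdges _ _).ncard = _
  rw [← range_cutEdge, Set.ncard_range_of_injective cutEdge_injective, card_cutEdgeIndex, hsum]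

/-- For any assignment `σ` of element pairs to biclique communities, the number of
inter-community edges of `G(A)` is exactly `2a(k−1) + 6k`. -/
theorem stmt_15 (k a : ℕ) (hk : 0 < k) (ha : 0 < a) (hdvd : 7 ∣ a ^ 2)
    (av : Fin (3 * k) → ℕ) (hpos : ∀ i, 0 < av i) (hsum : ∑ i, av i = a)
    (σ : Fin (3 * k) → Fin k) :
    {e ∈ (gadgetGraph k (a ^ 2 / 7) av).edgeSet |
        ¬ (Sym2.map (commOf k (a ^ 2 / 7) av σ) e).IsDiag}.ncard
      = 2 * a * (k - 1) + 6 * k :=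
  stmt_15_general k a av hsum σ
end

section
/- Suppose R_{Cⱼ} = a² + 2a + 6 for every biclique community Cⱼ, where the red element vertices assigned to Cⱼ have degrees k·aᵢ + 2 with b/4 < aᵢ < b/2 and a = k·b. Then each Cⱼ contains exactly three red element vertices x_s, x_t, x_u with a_s + a_t + a_u = b. -/
open Finset

theorem eq_three_and_eq_of_mul_add_two_mul_eq {k s c b : ℕ} (hk : 0 < k)
    (h : k * s + 2 * c = k * b + 6) (hlow : c * b < 4 * s) (hhigh : 2 * s < c * b) :
    c = 3 ∧ s = b := by
  have hc : c = 3 := by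
    rcases lt_trichotomy c 3 with hc | hc | hc
    · have hsb : b < s := Nat.lt_of_mul_lt_mul_left (show k * b < k * s by omega)
      nlinarith
    · exact hc
    · have hsb : s < b := Nat.lt_of_mul_lt_mul_left (show k * s < k * b by omega)
      nlinarith
  subst hc
  exact ⟨rfl, Nat.eq_of_mul_eq_mul_left hk (by omega)⟩

theorem card_eq_three_and_sum_eq_of_sum_mul_add_two_eq {ι : Type*} (S : Finset ι) (w : ι → ℕ)
    {k b : ℕ} (hk : 0 < k) (hlow : ∀ i ∈ S, b < 4 * w i) (hhigh : ∀ i ∈ S, 2 * w i < b)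
    (hS : ∑ i ∈ S, (k * w i + 2) = k * b + 6) :
    #S = 3 ∧ ∑ i ∈ S, w i = b := by
  rw [sum_add_distrib, ← mul_sum, sum_const, smul_eq_mul, mul_comm #S] at hS
  obtain rfl | hne := S.eq_empty_or_nonempty
  · simp at hS
  have hcard_lt : #S * b < 4 * ∑ i ∈ S, w i := by
    rw [← smul_eq_mul, ← sum_const, mul_sum]
    exact sum_lt_sum_of_nonempty hne hlow
  have hlt_card : 2 * ∑ i ∈ S, w i < #S * b := by
    rw [← smul_eq_mul (#S), ← sum_const, mul_sum]
    exact sum_lt_sum_of_nonempty hne hhigh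
  exact eq_three_and_eq_of_mul_add_two_mul_eq hk hS hcard_lt hlt_card

theorem stmt_17_general (k a b : ℕ) (hab : a = k * b)
    (av : Fin (3 * k) → ℕ)
    (hlow : ∀ i, b < 4 * av i) (hhigh : ∀ i, 2 * av i < b)
    (σ : Fin (3 * k) → Fin k)
    (hR : ∀ j, a * (a + 1)
        + ∑ i ∈ Finset.univ.filter (fun i => σ i = j), (k * av i + 2)
        = a ^ 2 + 2 * a + 6) :
    ∀ j, (Finset.univ.filter (fun i => σ i = j)).card = 3 ∧
      ∑ i ∈ Finset.univ.filter (fun i => σ i = j), av i = b := by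
  intro j
  refine card_eq_three_and_sum_eq_of_sum_mul_add_two_eq _ av j.pos
    (fun i _ => hlow i) (fun i _ => hhigh i) ?_
  have h := hR j
  rw [← hab]
  nlinarith

/-- If every biclique community attains red degree sum `a² + 2a + 6`, then each community
contains exactly three element vertices, whose elements sum to `b`. -/
theorem stmt_17 (k a b : ℕ) (hk : 1 ≤ k) (hb : 0 < b) (hab : a = k * b)
    (av : Fin (3 * k) → ℕ) (hpos : ∀ i, 0 < av i) (hsum : ∑ i, av i = a)
    (hlow : ∀ i, b < 4 * av i) (hhigh : ∀ i, 2 * av i < b)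
    (σ : Fin (3 * k) → Fin k)
    (hR : ∀ j, a * (a + 1)
        + ∑ i ∈ Finset.univ.filter (fun i => σ i = j), (k * av i + 2)
        = a ^ 2 + 2 * a + 6) :
    ∀ j, (Finset.univ.filter (fun i => σ i = j)).card = 3 ∧
      ∑ i ∈ Finset.univ.filter (fun i => σ i = j), av i = b :=
  stmt_17_general k a b hab av hlow hhigh σ hR
end

section
/- Let 𝒞 be a partition of the vertices of a bipartite graph and let 𝒞' be obtained from 𝒞 by moving a red leaf ℓ (a degree-1 red vertex) from its current community C₁ into the community C₂ containing its unique neighbor, where ℓ ∉ C₂. Then Q_b(𝒞') − Q_b(𝒞) = 1/m − B'/m² + B₁/m², where B' is the sum of the degrees of blue vertices of C₂ and B₁ that of C₁∖{ℓ}; in particular if B' < m and B₁ ≥ 0 then Q_b(𝒞') > Q_b(𝒞) whenever B' < m + B₁— specifically, if the blue degree sum of C₂ is strictly less than m, the move strictly increases Q_b. -/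
/-!
Moving `ℓ` only changes the summands of the two communities `P ℓ` and `P v`. The edge `s(ℓ, v)`
becomes internal to `P v`, gaining `1/m`; the red degree `1` of `ℓ` moves from `P ℓ` to `P v`, so
the penalty of `P v` grows by `B'/m²` and that of `P ℓ` shrinks by `B₁/m²`, while the blue degree
sums do not change because `ℓ` is red.
-/

open scoped Classical

/-- Barber's bipartite modularity of the division given by the fibers of `P`. -/
noncomputable def bipartiteModularity {V ι : Type*} [Fintype V] [Fintype ι]
    (G : SimpleGraph V) (c : V → Bool) (m : ℕ) (P : V → ι) : ℚ :=
  ∑ j, ((({e ∈ G.edgeSet | Sym2.map P e = Sym2.diag j}).ncard : ℚ) / m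
    - (∑ v ∈ Finset.univ.filter (fun v => P v = j ∧ c v = true),
        ((G.neighborSet v).ncard : ℚ))
      * (∑ v ∈ Finset.univ.filter (fun v => P v = j ∧ c v = false),
        ((G.neighborSet v).ncard : ℚ)) / (m : ℚ) ^ 2)

theorem Set.ncard_sep_eq_ncard_sep_ne_add {α : Type*} {E : Set α} (hE : E.Finite) {s : α}
    (hs : s ∈ E) (p : α → Prop) :
    ({e ∈ E | p e}).ncard = ({e ∈ E | e ≠ s ∧ p e}).ncard + if p s then 1 else 0 := by
  by_cases hp : p s
  · have hinsert : {e ∈ E | p e} = insert s {e ∈ E | e ≠ s ∧ p e} := by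
      ext e
      by_cases he : e = s
      · simp [he, hs, hp]
      · simp [he]
    rw [hinsert, Set.ncard_insert_of_notMem (by simp) (hE.subset fun e he => he.1), if_pos hp]
  · rw [if_neg hp, add_zero]
    congr 1
    ext e
    by_cases he : e = s
    · simp [he, hp]
    · simp [he]

theorem SimpleGraph.eq_of_mem_edgeSet_of_neighborSet_eq_singleton {V : Type*}
    {G : SimpleGraph V} {ℓ v : V} (hleaf : G.neighborSet ℓ = {v}) {e : Sym2 V}
    (he : e ∈ G.edgeSet) (hℓe : ℓ ∈ e) : e = s(ℓ, v) := by
  obtain ⟨w, rfl⟩ := Sym2.mem_iff_exists.mp hℓe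
  have hw : w ∈ G.neighborSet ℓ := he
  rw [hleaf, Set.mem_singleton_iff] at hw
  rw [hw]

namespace BipartiteModularity

variable {V ι : Type*} (G : SimpleGraph V) (c : V → Bool)

noncomputable def intraEdgeCount (P : V → ι) (j : ι) : ℚ :=
  ({e ∈ G.edgeSet | Sym2.map P e = Sym2.diag j}).ncard

noncomputable def degreeSum [Fintype V] (b : Bool) (P : V → ι) (j : ι) : ℚ :=
  ∑ v ∈ Finset.univ.filter (fun v => P v = j ∧ c v = b), ((G.neighborSet v).ncard : ℚ)

theorem _root_.bipartiteModularity_eq [Fintype V] [Fintype ι] (m : ℕ) (P : V → ι) :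
    bipartiteModularity G c m P = ∑ j, (intraEdgeCount G P j / m
      - degreeSum G c true P j * degreeSum G c false P j / (m : ℚ) ^ 2) :=
  rfl

theorem degreeSum_nonneg [Fintype V] (b : Bool) (P : V → ι) (j : ι) : 0 ≤ degreeSum G c b P j :=
  Finset.sum_nonneg fun _ _ => by positivity

variable [DecidableEq V] {G c}

theorem sum_filter_ne_eq_degreeSum [Fintype V] {ℓ : V} {b : Bool} (hℓ : c ℓ ≠ b) (P : V → ι)
    (j : ι) :
    ∑ w ∈ Finset.univ.filter (fun w => P w = j ∧ c w = b ∧ w ≠ ℓ), ((G.neighborSet w).ncard : ℚ)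
      = degreeSum G c b P j := by
  refine Finset.sum_congr (Finset.filter_congr fun w _ => ?_) fun _ _ => rfl
  exact and_congr_right fun _ => and_iff_left_of_imp fun hw hwℓ => hℓ (hwℓ ▸ hw)

theorem degreeSum_update_sub [Fintype V] (b : Bool) (P : V → ι) (ℓ : V) (i j : ι) :
    degreeSum G c b (Function.update P ℓ i) j - degreeSum G c b P j
      = (if i = j ∧ c ℓ = b then ((G.neighborSet ℓ).ncard : ℚ) else 0)
        - (if P ℓ = j ∧ c ℓ = b then ((G.neighborSet ℓ).ncard : ℚ) else 0) := by
  simp only [degreeSum, Finset.sum_filter]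
  rw [Fintype.sum_eq_add_sum_compl ℓ, Fintype.sum_eq_add_sum_compl ℓ, Function.update_self]
  have hrest : ∀ w ∈ ({ℓ}ᶜ : Finset V), Function.update P ℓ i w = P w := fun w hw =>
    Function.update_of_ne (by simpa using hw) _ _
  rw [Finset.sum_congr rfl fun w hw => by rw [hrest w hw]]
  ring

theorem map_update_eq_of_mem_edgeSet {ℓ v : V} (hleaf : G.neighborSet ℓ = {v}) (P : V → ι)
    (i : ι) {e : Sym2 V} (he : e ∈ G.edgeSet) (hne : e ≠ s(ℓ, v)) :
    Sym2.map (Function.update P ℓ i) e = Sym2.map P e :=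
  Sym2.map_congr fun w hw => Function.update_of_ne
    (by rintro rfl; exact hne (G.eq_of_mem_edgeSet_of_neighborSet_eq_singleton hleaf he hw)) _ _

theorem intraEdgeCount_update_sub [Finite V] {ℓ v : V} (hleaf : G.neighborSet ℓ = {v})
    (P : V → ι) (i j : ι) :
    intraEdgeCount G (Function.update P ℓ i) j - intraEdgeCount G P j
      = (if i = j ∧ P v = j then 1 else 0) - (if P ℓ = j ∧ P v = j then 1 else 0) := by
  have hadj : G.Adj ℓ v := by simp [← SimpleGraph.mem_neighborSet, hleaf]
  have hedge : s(ℓ, v) ∈ G.edgeSet := hadj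
  have hrest : {e ∈ G.edgeSet | e ≠ s(ℓ, v) ∧ Sym2.map (Function.update P ℓ i) e = Sym2.diag j}
      = {e ∈ G.edgeSet | e ≠ s(ℓ, v) ∧ Sym2.map P e = Sym2.diag j} := by
    ext e
    exact and_congr_right fun he => and_congr_right fun hne => by
      rw [map_update_eq_of_mem_edgeSet hleaf P i he hne]
  simp only [intraEdgeCount]
  rw [Set.ncard_sep_eq_ncard_sep_ne_add G.edgeSet.toFinite hedge
      (fun e => Sym2.map (Function.update P ℓ i) e = Sym2.diag j),
    Set.ncard_sep_eq_ncard_sep_ne_add G.edgeSet.toFinite hedge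
      (fun e => Sym2.map P e = Sym2.diag j), hrest]
  simp [Sym2.diag, Function.update_of_ne (G.ne_of_adj hadj).symm]

theorem bipartiteModularity_update_sub [Fintype V] [Fintype ι] (m : ℕ) (P : V → ι) {ℓ v : V}
    (hred : c ℓ = true) (hleaf : G.neighborSet ℓ = {v}) (hsep : P ℓ ≠ P v) :
    bipartiteModularity G c m (Function.update P ℓ (P v)) - bipartiteModularity G c m P
      = 1 / m - degreeSum G c false P (P v) / (m : ℚ) ^ 2
        + degreeSum G c false P (P ℓ) / (m : ℚ) ^ 2 := by
  have hdeg : ((G.neighborSet ℓ).ncard : ℚ) = 1 := by simp [hleaf]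
  have hE (j : ι) : intraEdgeCount G (Function.update P ℓ (P v)) j
      = intraEdgeCount G P j + if P v = j then 1 else 0 := by
    have hnot : ¬(P ℓ = j ∧ P v = j) := fun h => hsep (h.1.trans h.2.symm)
    have := intraEdgeCount_update_sub hleaf P (P v) j
    simp only [if_neg hnot, and_self] at this
    linarith
  have hR (j : ι) : degreeSum G c true (Function.update P ℓ (P v)) j
      = degreeSum G c true P j + (if P v = j then 1 else 0) - (if P ℓ = j then 1 else 0) := by
    have := degreeSum_update_sub (G := G) (c := c) true P ℓ (P v) j
    simp only [hred, and_true, hdeg] at this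
    linarith
  have hB (j : ι) : degreeSum G c false (Function.update P ℓ (P v)) j
      = degreeSum G c false P j := by
    have := degreeSum_update_sub (G := G) (c := c) false P ℓ (P v) j
    simpa [hred, sub_eq_zero] using this
  rw [bipartiteModularity_eq, bipartiteModularity_eq, ← Finset.sum_sub_distrib]
  simp only [hE, hR, hB]
  calc _ = ∑ j, ((if P v = j then 1 / m - degreeSum G c false P j / (m : ℚ) ^ 2 else 0)
        + (if P ℓ = j then degreeSum G c false P j / (m : ℚ) ^ 2 else 0)) := by
        refine Finset.sum_congr rfl fun j _ => ?_
        split_ifs <;> ring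
    _ = _ := by simp [Finset.sum_add_distrib]

end BipartiteModularity

open BipartiteModularity in
theorem stmt_19_general {V ι : Type*} [Fintype V] [Fintype ι] [DecidableEq V]
    (G : SimpleGraph V) (c : V → Bool)
    (m : ℕ)
    (P : V → ι) (ℓ v : V)
    (hred : c ℓ = true) (hleaf : G.neighborSet ℓ = {v})
    (hsep : P ℓ ≠ P v)
    (B' B₁ : ℚ)
    (hB' : B' = ∑ w ∈ Finset.univ.filter (fun w => P w = P v ∧ c w = false),
        ((G.neighborSet w).ncard : ℚ))
    (hB₁ : B₁ = ∑ w ∈ Finset.univ.filter (fun w => P w = P ℓ ∧ c w = false ∧ w ≠ ℓ),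
        ((G.neighborSet w).ncard : ℚ)) :
    (bipartiteModularity G c m (Function.update P ℓ (P v))
        - bipartiteModularity G c m P
      = 1 / m - B' / (m : ℚ) ^ 2 + B₁ / (m : ℚ) ^ 2) ∧
    ((B' : ℚ) < m →
      bipartiteModularity G c m (Function.update P ℓ (P v))
        > bipartiteModularity G c m P) := by
  have hB'eq : B' = degreeSum G c false P (P v) := hB'
  have hB₁eq : B₁ = degreeSum G c false P (P ℓ) :=
    hB₁.trans (sum_filter_ne_eq_degreeSum (by simp [hred]) P (P ℓ))
  have hdiff := bipartiteModularity_update_sub m P hred hleaf hsep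
  rw [← hB'eq, ← hB₁eq] at hdiff
  refine ⟨hdiff, fun hlt => ?_⟩
  have hm : (0 : ℚ) < m := (hB'eq ▸ degreeSum_nonneg G c false P (P v)).trans_lt hlt
  have hgain : B' / (m : ℚ) ^ 2 < 1 / m := by
    rw [div_lt_div_iff₀ (by positivity) hm]
    nlinarith
  have hB₁nonneg : 0 ≤ B₁ / (m : ℚ) ^ 2 := by
    rw [hB₁eq]
    exact div_nonneg (degreeSum_nonneg G c false P (P ℓ)) (sq_nonneg _)
  linarith

/-- Moving a red leaf `ℓ` into the community of its unique neighbor `v` changes the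
bipartite modularity by exactly `1/m − B'/m² + B₁/m²`, where `B'` is the blue degree sum
of the neighbor's community and `B₁` that of `ℓ`'s old community minus `ℓ`; in particular
the move strictly increases modularity whenever `B' < m`. -/
theorem stmt_19 {V ι : Type*} [Fintype V] [Fintype ι] [DecidableEq V]
    (G : SimpleGraph V) (c : V → Bool)
    (hbip : ∀ x y, G.Adj x y → c x ≠ c y)
    (m : ℕ) (hm : m = G.edgeSet.ncard) (hm1 : 1 ≤ m)
    (P : V → ι) (ℓ v : V)
    (hred : c ℓ = true) (hleaf : G.neighborSet ℓ = {v})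
    (hsep : P ℓ ≠ P v)
    (B' B₁ : ℚ)
    (hB' : B' = ∑ w ∈ Finset.univ.filter (fun w => P w = P v ∧ c w = false),
        ((G.neighborSet w).ncard : ℚ))
    (hB₁ : B₁ = ∑ w ∈ Finset.univ.filter (fun w => P w = P ℓ ∧ c w = false ∧ w ≠ ℓ),
        ((G.neighborSet w).ncard : ℚ)) :
    (bipartiteModularity G c m (Function.update P ℓ (P v))
        - bipartiteModularity G c m P
      = 1 / m - B' / (m : ℚ) ^ 2 + B₁ / (m : ℚ) ^ 2) ∧
    ((B' : ℚ) < m →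
      bipartiteModularity G c m (Function.update P ℓ (P v))
        > bipartiteModularity G c m P) :=
  stmt_19_general G c m P ℓ v hred hleaf hsep B' B₁ hB' hB₁
end
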